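/- arXiv:1507.08855 — 3 statements merged into one kernel-verified Lean document; each statement's English description precedes it below -/
import Mathlib

section
/- For all continuous functions g, h : ℝ → ℝ and every t ≥ 0, one has ((g⋄h)(t))² ≤ (∫₀ᵗ |g(s)| ds)·(|g|□h)(t), where |g| denotes the function s ↦ |g(s)|. -/
/-!
Bounding the integrand by its absolute value and applying the Cauchy–Schwarz inequality with the
nonnegative weight `|g (t - s)|` gives `(g⋄h)(t)² ≤ (∫₀ᵗ |g(t - s)| ds) · (|g|□h)(t)`; the
substitution `s ↦ t - s` turns the first factor into `∫₀ᵗ |g(s)| ds`.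
-/

open MeasureTheory

theorem sq_integral_mul_le_integral_mul_integral_mul_sq {α : Type*} [MeasurableSpace α]
    {μ : Measure α} {w f : α → ℝ} (hw : 0 ≤ᵐ[μ] w) (hw_int : Integrable w μ)
    (hwf : Integrable (fun a => w a * f a) μ) (hwf2 : Integrable (fun a => w a * f a ^ 2) μ) :
    (∫ a, w a * f a ∂μ) ^ 2 ≤ (∫ a, w a ∂μ) * ∫ a, w a * f a ^ 2 ∂μ := by
  -- `x ↦ ∫ w (x - f)²` is a nonnegative quadratic polynomial, so its discriminant is `≤ 0`.
  have hquad : ∀ x : ℝ, 0 ≤ (∫ a, w a ∂μ) * (x * x) + (-2 * ∫ a, w a * f a ∂μ) * x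
      + ∫ a, w a * f a ^ 2 ∂μ := by
    intro x
    have hexp : ∫ a, w a * (x - f a) ^ 2 ∂μ = (∫ a, w a ∂μ) * (x * x)
        + (-2 * ∫ a, w a * f a ∂μ) * x + ∫ a, w a * f a ^ 2 ∂μ := by
      have hexpand : (fun a => w a * (x - f a) ^ 2)
          = fun a => (x * x) * w a + (-2 * x) * (w a * f a) + w a * f a ^ 2 := by
        ext a; ring
      rw [hexpand, integral_add _ hwf2, integral_add (hw_int.const_mul _) (hwf.const_mul _),
        integral_const_mul, integral_const_mul]
      · ring
      · exact (hw_int.const_mul _).add (hwf.const_mul _)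
    rw [← hexp]
    exact integral_nonneg_of_ae (hw.mono fun a ha => mul_nonneg ha (sq_nonneg _))
  have hdiscrim := discrim_le_zero hquad
  rw [discrim] at hdiscrim
  nlinarith

theorem sq_integral_mul_le_integral_abs_mul_integral_abs_mul_sq {α : Type*} [MeasurableSpace α]
    {μ : Measure α} {w f : α → ℝ} (hw : Integrable w μ)
    (hwf : Integrable (fun a => w a * f a) μ) (hwf2 : Integrable (fun a => w a * f a ^ 2) μ) :
    (∫ a, w a * f a ∂μ) ^ 2 ≤ (∫ a, |w a| ∂μ) * ∫ a, |w a| * f a ^ 2 ∂μ := by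
  calc (∫ a, w a * f a ∂μ) ^ 2 ≤ (∫ a, |w a| * |f a| ∂μ) ^ 2 := by
        rw [← sq_abs]
        gcongr
        exact abs_integral_le_integral_abs.trans_eq (by simp only [abs_mul])
    _ ≤ (∫ a, |w a| ∂μ) * ∫ a, |w a| * |f a| ^ 2 ∂μ :=
        sq_integral_mul_le_integral_mul_integral_mul_sq (.of_forall fun a => abs_nonneg _) hw.abs
          (by simpa only [abs_mul] using hwf.abs)
          (by simpa only [abs_mul, abs_pow, sq_abs] using hwf2.abs)
    _ = (∫ a, |w a| ∂μ) * ∫ a, |w a| * f a ^ 2 ∂μ := by simp only [sq_abs]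

/-- For functions `g, h : ℝ → ℝ` and `t ≥ 0`:
`(g⋄h)(t) = ∫₀ᵗ g(t−s)(h(t)−h(s)) ds` and `(g□h)(t) = ∫₀ᵗ g(t−s)(h(t)−h(s))² ds`.
STATEMENT 1: for continuous `g, h` and `t ≥ 0`,
`((g⋄h)(t))² ≤ (∫₀ᵗ |g(s)| ds) · ((|g|□h)(t))`. -/
theorem stmt1 (g h : ℝ → ℝ) (hg : Continuous g) (hh : Continuous h)
    (t : ℝ) (ht : 0 ≤ t) :
    (∫ s in (0:ℝ)..t, g (t - s) * (h t - h s)) ^ 2 ≤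
      (∫ s in (0:ℝ)..t, |g s|) * ∫ s in (0:ℝ)..t, |g (t - s)| * (h t - h s) ^ 2 := by
  have hg' : Continuous fun s => g (t - s) := hg.comp (continuous_const.sub continuous_id)
  have hreflect : ∫ s in (0:ℝ)..t, |g s| = ∫ s in (0:ℝ)..t, |g (t - s)| := by
    simpa using (intervalIntegral.integral_comp_sub_left (fun s => |g s|) t (a := 0) (b := t)).symm
  rw [hreflect]
  simp only [intervalIntegral.integral_of_le ht]
  exact sq_integral_mul_le_integral_abs_mul_integral_abs_mul_sq hg'.integrableOn_Ioc
    (by fun_prop : Continuous _).integrableOn_Ioc (by fun_prop : Continuous _).integrableOn_Ioc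
end

section
/- For all continuously differentiable functions g, h : ℝ → ℝ and every t ≥ 0, the following identity holds: 2·(g*h)(t)·h'(t) = (g'□h)(t) − g(t)·h(t)² − (d/dt)[ (g□h)(t) − (∫₀ᵗ g(s) ds)·h(t)² ]. -/
/-!
By the Leibniz rule, the derivative of `(g□h)(r) = ∫₀ʳ g(r−s)(h(r)−h(s))² ds` is `(g'□h)(t) + 2h'(t)(g⋄h)(t)`,
the boundary term vanishing because the integrand is zero on the diagonal `s = r`. The product rule
differentiates `(∫₀ʳ g)·h(r)²`, and `(g⋄h)(t) = h(t)∫₀ᵗ g − (g*h)(t)` turns the difference of the two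
derivatives into the claimed identity.
-/

open Set intervalIntegral

section Leibniz

variable {E : Type*} [NormedAddCommGroup E] [NormedSpace ℝ E] {f f' : ℝ → ℝ → E}

theorem hasDerivAt_intervalIntegral_param (hf : Continuous ↿f) (hf' : Continuous ↿f')
    (hderiv : ∀ x s, HasDerivAt (f · s) (f' x s) x) (a b x₀ : ℝ) :
    HasDerivAt (fun x => ∫ s in a..b, f x s) (∫ s in a..b, f' x₀ s) x₀ := by
  obtain ⟨C, hC⟩ := (isCompact_closedBall x₀ 1 |>.prod isCompact_uIcc).exists_bound_of_continuousOn
    hf'.continuousOn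
  refine (hasDerivAt_integral_of_dominated_loc_of_deriv_le (bound := fun _ => C)
    (Metric.closedBall_mem_nhds x₀ one_pos) ?_ ((hf.uncurry_left x₀).intervalIntegrable a b)
    (hf'.uncurry_left x₀).aestronglyMeasurable ?_ intervalIntegrable_const ?_).2
  · exact .of_forall fun x => (hf.uncurry_left x).aestronglyMeasurable
  · exact .of_forall fun s hs x hx => hC (x, s) ⟨hx, uIoc_subset_uIcc hs⟩
  · exact .of_forall fun s _ x _ => hderiv x s

theorem hasDerivAt_intervalIntegral_leibniz [CompleteSpace E] (hf : Continuous ↿f)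
    (hf' : Continuous ↿f') (hderiv : ∀ x s, HasDerivAt (f · s) (f' x s) x) (a t : ℝ) :
    HasDerivAt (fun r => ∫ s in a..r, f r s) (f t t + ∫ s in a..t, f' t s) t := by
  -- `(x, r) ↦ ∫ s in a..r, f x s` has continuous partial derivatives, so it is strictly
  -- differentiable and can be composed with the diagonal `r ↦ (r, r)`.
  have hΨ := hasStrictFDerivAt_uncurry_coprod (u := (t, t)) (f := fun x r => ∫ s in a..r, f x s)
    (f₁ := fun x r => ContinuousLinearMap.toSpanSingleton ℝ (∫ s in a..r, f' x s))
    (f₂ := fun x r => ContinuousLinearMap.toSpanSingleton ℝ (f x r))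
    (.of_forall fun p => (hasDerivAt_intervalIntegral_param hf hf' hderiv a p.2 p.1).hasFDerivAt)
    (.of_forall fun p => (integral_hasDerivAt_right ((hf.uncurry_left p.1).intervalIntegrable _ _)
      ((hf.uncurry_left p.1).stronglyMeasurableAtFilter _ _)
      (hf.uncurry_left p.1).continuousAt).hasFDerivAt)
    (ContinuousLinearMap.toSpanSingletonCLE.continuous.comp
      (continuous_parametric_primitive_of_continuous hf')).continuousAt
    (ContinuousLinearMap.toSpanSingletonCLE.continuous.comp hf).continuousAt
  refine (hΨ.hasFDerivAt.comp_hasDerivAt (f := fun r => (r, r)) t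
    ((hasDerivAt_id t).prodMk (hasDerivAt_id t))).congr_deriv ?_
  simp [Function.HasUncurry.uncurry, add_comm]

end Leibniz

theorem integral_comp_sub_mul_sub {g h : ℝ → ℝ} (hg : Continuous g) (hh : Continuous h) (t : ℝ) :
    ∫ s in (0:ℝ)..t, g (t - s) * (h t - h s) =
      h t * (∫ s in (0:ℝ)..t, g s) - ∫ s in (0:ℝ)..t, g (t - s) * h s := by
  simp_rw [mul_sub]
  rw [integral_sub ((by fun_prop : Continuous fun s => g (t - s) * h t).intervalIntegrable _ _)
    ((by fun_prop : Continuous fun s => g (t - s) * h s).intervalIntegrable _ _),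
    integral_mul_const, mul_comm, integral_comp_sub_left g t]
  simp

theorem hasDerivAt_integral_comp_sub_mul_sub_sq {g h : ℝ → ℝ} (hg : ContDiff ℝ 1 g)
    (hh : ContDiff ℝ 1 h) (t : ℝ) :
    HasDerivAt (fun r => ∫ s in (0:ℝ)..r, g (r - s) * (h r - h s) ^ 2)
      ((∫ s in (0:ℝ)..t, deriv g (t - s) * (h t - h s) ^ 2) +
        2 * deriv h t * ∫ s in (0:ℝ)..t, g (t - s) * (h t - h s)) t := by
  have hg' := hg.continuous_deriv le_rfl
  have hh' := hh.continuous_deriv le_rfl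
  have hgc := hg.continuous
  have hhc := hh.continuous
  have hderiv : ∀ x s, HasDerivAt (fun x => g (x - s) * (h x - h s) ^ 2)
      (deriv g (x - s) * (h x - h s) ^ 2 + 2 * deriv h x * (g (x - s) * (h x - h s))) x := by
    intro x s
    have dg := (hg.differentiable one_ne_zero (x - s)).hasDerivAt.comp_sub_const x s
    have dh := (hh.differentiable one_ne_zero x).hasDerivAt
    refine (dg.mul ((dh.sub_const (h s)).pow 2)).congr_deriv ?_
    simp only [Pi.pow_apply]
    push_cast
    ring
  have key := hasDerivAt_intervalIntegral_leibniz (by fun_prop) (by fun_prop) hderiv 0 t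
  rw [integral_add
    ((by fun_prop : Continuous fun s => deriv g (t - s) * (h t - h s) ^ 2).intervalIntegrable _ _)
    ((by fun_prop : Continuous fun s => 2 * deriv h t * (g (t - s) * (h t - h s))).intervalIntegrable
      _ _)] at key
  simpa [integral_const_mul] using key

theorem stmt2_general (g h : ℝ → ℝ) (hg : ContDiff ℝ 1 g) (hh : ContDiff ℝ 1 h)
    (t : ℝ) :
    2 * (∫ s in (0:ℝ)..t, g (t - s) * h s) * deriv h t =
      (∫ s in (0:ℝ)..t, deriv g (t - s) * (h t - h s) ^ 2) - g t * (h t) ^ 2 -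
        deriv (fun r =>
          (∫ s in (0:ℝ)..r, g (r - s) * (h r - h s) ^ 2) -
            (∫ s in (0:ℝ)..r, g s) * (h r) ^ 2) t := by
  have hG := (hg.continuous.integral_hasStrictDerivAt 0 t).hasDerivAt
  have hH := (hh.differentiable one_ne_zero t).hasDerivAt
  have hbox : HasDerivAt (fun r => (∫ s in (0:ℝ)..r, g (r - s) * (h r - h s) ^ 2) -
      (∫ s in (0:ℝ)..r, g s) * (h r) ^ 2) _ t :=
    (hasDerivAt_integral_comp_sub_mul_sub_sq hg hh t).sub (hG.mul (hH.pow 2))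
  rw [hbox.deriv, integral_comp_sub_mul_sub hg.continuous hh.continuous]
  ring

/-- for `C¹` functions `g, h : ℝ → ℝ` and every `t ≥ 0`:
`2·(g*h)(t)·h'(t) = (g'□h)(t) − g(t)·h(t)² − d/dt [ (g□h)(t) − (∫₀ᵗ g(s) ds)·h(t)² ]`,
where `(g*h)(t) = ∫₀ᵗ g(t−s)h(s) ds` and `(g□h)(t) = ∫₀ᵗ g(t−s)(h(t)−h(s))² ds`. -/
theorem stmt2 (g h : ℝ → ℝ) (hg : ContDiff ℝ 1 g) (hh : ContDiff ℝ 1 h)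
    (t : ℝ) (ht : 0 ≤ t) :
    2 * (∫ s in (0:ℝ)..t, g (t - s) * h s) * deriv h t =
      (∫ s in (0:ℝ)..t, deriv g (t - s) * (h t - h s) ^ 2) - g t * (h t) ^ 2 -
        deriv (fun r =>
          (∫ s in (0:ℝ)..r, g (r - s) * (h r - h s) ^ 2) -
            (∫ s in (0:ℝ)..r, g s) * (h r) ^ 2) t :=
  stmt2_general g h hg hh t
end

section
/- Fix reals 0 < L₁ < L₂ < L₃, set Ω = (0,L₁) ∪ (L₂,L₃), fix τ > 0, and let u : ([0,L₁] ∪ [L₂,L₃]) × [−τ,∞) → ℝ be of class C². Set z(x,ρ,t) := u_t(x, t−τρ) and define F₃(t) := τ·∫_Ω ∫₀¹ e^{−τρ} z(x,ρ,t)² dρ dx, where ∫_Ω f dx := ∫₀^{L₁} f dx + ∫_{L₂}^{L₃} f dx. Then for every t > 0: F₃'(t) ≤ −e^{−τ}·( ∫_Ω z(x,1,t)² dx + τ·∫_Ω ∫₀¹ z(x,ρ,t)² dρ dx ) + ∫_Ω u_t(x,t)² dx. -/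
/-!
Extend `u_t` from `([0,L₁] ∪ [L₂,L₃]) × (−τ, ∞)` to a continuous `G` on `ℝ²` (Tietze) and put
`ψ s = ∫_Ω G(x,s)² dx`. For `r > 0`, Fubini and the substitution `s = r − τρ` give
`F₃(r) = e^{−r} ∫_{r−τ}^r e^s ψ(s) ds`, hence `F₃' = ψ(r) − e^{−τ} ψ(r−τ) − F₃`, and
`e^{−τρ} ≥ e^{−τ}` on `[0,1]` bounds `F₃(t)` below by `e^{−τ} τ ∫₀¹ ψ(t−τρ) dρ`.
-/

open intervalIntegral

open MeasureTheory Set Function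

universe u v

theorem ContinuousOn.exists_continuous_eqOn {X : Type u} {Y : Type v} [TopologicalSpace X]
    [NormalSpace X] [TopologicalSpace Y] [TietzeExtension.{u, v} Y] {s : Set X} {f : X → Y}
    (hs : IsClosed s) (hf : ContinuousOn f s) : ∃ g : X → Y, Continuous g ∧ EqOn g f s := by
  obtain ⟨g, hg⟩ := ContinuousMap.exists_restrict_eq hs ⟨s.domRestrict f, hf.domRestrict⟩
  exact ⟨g, g.continuous, fun x hx => ContinuousMap.congr_fun hg ⟨x, hx⟩⟩

theorem UniqueDiffOn.union {𝕜 E : Type*} [NontriviallyNormedField 𝕜] [NormedAddCommGroup E]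
    [NormedSpace 𝕜 E] {s t : Set E} (hs : UniqueDiffOn 𝕜 s) (ht : UniqueDiffOn 𝕜 t) :
    UniqueDiffOn 𝕜 (s ∪ t) := by
  rintro x (hx | hx)
  · exact (hs x hx).mono subset_union_left
  · exact (ht x hx).mono subset_union_right

theorem exists_continuous_hasDerivAt_of_contDiffOn {K : Set ℝ} {u : ℝ → ℝ → ℝ} {a : ℝ}
    (hK : IsClosed K) (hKu : UniqueDiffOn ℝ K)
    (hu : ContDiffOn ℝ 1 (uncurry u) (K ×ˢ Ici a)) :
    ∃ G : ℝ × ℝ → ℝ, Continuous G ∧ ∀ x ∈ K, ∀ s, a < s → HasDerivAt (u x) (G (x, s)) s := by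
  have hS : UniqueDiffOn ℝ (K ×ˢ Ici a) := hKu.prod (uniqueDiffOn_Ici a)
  obtain ⟨G, hG, hGD⟩ := ContinuousOn.exists_continuous_eqOn (hK.prod isClosed_Ici)
    ((hu.continuousOn_fderivWithin hS le_rfl).clm_apply
      (continuousOn_const (c := ((0 : ℝ), (1 : ℝ)))))
  refine ⟨G, hG, fun x hx s hs => ?_⟩
  have hmem : (x, s) ∈ K ×ˢ Ici a := ⟨hx, hs.le⟩
  have hslice : HasDerivWithinAt (fun s' => (x, s')) ((0 : ℝ), (1 : ℝ)) (Ici a) s :=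
    ((hasDerivAt_const s x).prodMk (hasDerivAt_id s)).hasDerivWithinAt
  rw [hGD hmem]
  exact ((hu.differentiableOn one_ne_zero _ hmem).hasFDerivWithinAt.comp_hasDerivWithinAt s hslice
    fun s' hs' => ⟨hx, hs'⟩).hasDerivAt (Ici_mem_nhds hs)

theorem intervalIntegral_integral_swap {F : ℝ → ℝ → ℝ} (hF : Continuous (uncurry F))
    {a b c d : ℝ} (hab : a ≤ b) (hcd : c ≤ d) :
    ∫ x in a..b, ∫ y in c..d, F x y = ∫ y in c..d, ∫ x in a..b, F x y := by
  simp only [integral_of_le hab, integral_of_le hcd]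
  refine integral_integral_swap ?_
  rw [Measure.prod_restrict]
  exact (hF.continuousOn.integrableOn_compact (isCompact_Icc.prod isCompact_Icc)).mono_set
    (prod_mono Ioc_subset_Icc_self Ioc_subset_Icc_self)

/-- `F₃` once the space integral `ψ s = ∫_Ω u_t(x,s)² dx` has been taken. -/
noncomputable def delayEnergy (τ : ℝ) (ψ : ℝ → ℝ) (r : ℝ) : ℝ :=
  τ * ∫ ρ in (0:ℝ)..1, Real.exp (-τ * ρ) * ψ (r - τ * ρ)

section DelayEnergy

variable {τ : ℝ} {ψ : ℝ → ℝ}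

theorem delayEnergy_eq_exp_mul_integral (hτ : τ ≠ 0) (r : ℝ) :
    delayEnergy τ ψ r = Real.exp (-r) * ∫ s in (r - τ)..r, Real.exp s * ψ s := by
  have hweight : ∀ ρ : ℝ, Real.exp (-τ * ρ) * ψ (r - τ * ρ)
      = Real.exp (-r) * (Real.exp (r - τ * ρ) * ψ (r - τ * ρ)) := fun ρ => by
    rw [← mul_assoc, ← Real.exp_add]; ring_nf
  simp only [delayEnergy, hweight, intervalIntegral.integral_const_mul,
    integral_comp_sub_mul (fun s => Real.exp s * ψ s) hτ, mul_zero, sub_zero, mul_one, smul_eq_mul]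
  field_simp

theorem hasDerivAt_delayEnergy (hτ : τ ≠ 0) (hψ : Continuous ψ) (t : ℝ) :
    HasDerivAt (delayEnergy τ ψ) (ψ t - Real.exp (-τ) * ψ (t - τ) - delayEnergy τ ψ t) t := by
  have hf : Continuous fun s => Real.exp s * ψ s := Real.continuous_exp.mul hψ
  have hprim : ∀ y, HasDerivAt (fun r => ∫ s in (0:ℝ)..r, Real.exp s * ψ s)
      (Real.exp y * ψ y) y :=
    fun y => (hf.integral_hasStrictDerivAt 0 y).hasDerivAt
  have hwindow : HasDerivAt (fun r => ∫ s in (r - τ)..r, Real.exp s * ψ s)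
      (Real.exp t * ψ t - Real.exp (t - τ) * ψ (t - τ)) t := by
    have hlag := (hprim (t - τ)).comp t ((hasDerivAt_id t).sub_const τ)
    refine ((hprim t).sub (by simpa using hlag)).congr_of_eventuallyEq
      (Filter.Eventually.of_forall fun r => ?_)
    exact (integral_interval_sub_left (hf.intervalIntegrable _ _) (hf.intervalIntegrable _ _)).symm
  rw [funext (delayEnergy_eq_exp_mul_integral hτ)]
  refine ((hasDerivAt_neg t).exp.mul hwindow).congr_deriv ?_
  simp only [Real.exp_sub, Real.exp_neg]
  field_simp
  ring

theorem exp_neg_mul_integral_le_delayEnergy (hτ : 0 ≤ τ) (hψ : Continuous ψ)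
    (hψ0 : ∀ s, 0 ≤ ψ s) (t : ℝ) :
    Real.exp (-τ) * (τ * ∫ ρ in (0:ℝ)..1, ψ (t - τ * ρ)) ≤ delayEnergy τ ψ t := by
  have hlag : Continuous fun ρ : ℝ => ψ (t - τ * ρ) := by fun_prop
  rw [mul_left_comm, ← intervalIntegral.integral_const_mul]
  refine mul_le_mul_of_nonneg_left (integral_mono_on zero_le_one
    ((continuous_const.mul hlag).intervalIntegrable _ _)
    ((Real.continuous_exp.comp (by fun_prop)).mul hlag |>.intervalIntegrable _ _)
    fun ρ hρ => ?_) hτ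
  exact mul_le_mul_of_nonneg_right (Real.exp_le_exp.2 (by nlinarith [hρ.2])) (hψ0 _)

end DelayEnergy

section SpaceIntegrals

variable {v : ℝ → ℝ → ℝ} {G : ℝ × ℝ → ℝ} {a b c d : ℝ}

theorem continuous_integral_sq (hG : Continuous G) (a b : ℝ) :
    Continuous fun s => ∫ x in a..b, G (x, s) ^ 2 :=
  continuous_parametric_intervalIntegral_of_continuous' (f := fun s x => G (x, s) ^ 2)
    (by fun_prop) a b

theorem integral_add_integral_sq_congr {s : ℝ} (hab : a ≤ b) (hcd : c ≤ d)
    (hv : ∀ x ∈ Icc a b ∪ Icc c d, v x s = G (x, s)) :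
    (∫ x in a..b, v x s ^ 2) + ∫ x in c..d, v x s ^ 2
      = (∫ x in a..b, G (x, s) ^ 2) + ∫ x in c..d, G (x, s) ^ 2 := by
  congr 1 <;> refine integral_congr fun x hx => ?_
  · rw [uIcc_of_le hab] at hx
    simp only [hv x (Or.inl hx)]
  · rw [uIcc_of_le hcd] at hx
    simp only [hv x (Or.inr hx)]

theorem integral_integral_delay_sq {w : ℝ → ℝ} {τ r : ℝ} (hG : Continuous G) (hw : Continuous w)
    (hab : a ≤ b) (hτ : 0 ≤ τ) (hv : ∀ x ∈ Icc a b, ∀ s, r - τ ≤ s → v x s = G (x, s)) :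
    ∫ x in a..b, ∫ ρ in (0:ℝ)..1, w ρ * v x (r - τ * ρ) ^ 2
      = ∫ ρ in (0:ℝ)..1, w ρ * ∫ x in a..b, G (x, r - τ * ρ) ^ 2 := by
  calc ∫ x in a..b, ∫ ρ in (0:ℝ)..1, w ρ * v x (r - τ * ρ) ^ 2
      = ∫ x in a..b, ∫ ρ in (0:ℝ)..1, w ρ * G (x, r - τ * ρ) ^ 2 := by
        refine integral_congr fun x hx => integral_congr fun ρ hρ => ?_
        rw [uIcc_of_le hab] at hx
        rw [uIcc_of_le zero_le_one] at hρ
        simp only [hv x hx (r - τ * ρ) (by nlinarith [hρ.2])]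
    _ = ∫ ρ in (0:ℝ)..1, ∫ x in a..b, w ρ * G (x, r - τ * ρ) ^ 2 :=
        intervalIntegral_integral_swap (F := fun x ρ => w ρ * G (x, r - τ * ρ) ^ 2)
          (by fun_prop) hab zero_le_one
    _ = ∫ ρ in (0:ℝ)..1, w ρ * ∫ x in a..b, G (x, r - τ * ρ) ^ 2 := by
        simp only [intervalIntegral.integral_const_mul]

theorem integral_integral_delay_sq_add {w : ℝ → ℝ} {τ r : ℝ} (hG : Continuous G)
    (hw : Continuous w) (hab : a ≤ b) (hcd : c ≤ d) (hτ : 0 ≤ τ)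
    (hv : ∀ x ∈ Icc a b ∪ Icc c d, ∀ s, r - τ ≤ s → v x s = G (x, s)) :
    (∫ x in a..b, ∫ ρ in (0:ℝ)..1, w ρ * v x (r - τ * ρ) ^ 2)
        + ∫ x in c..d, ∫ ρ in (0:ℝ)..1, w ρ * v x (r - τ * ρ) ^ 2
      = ∫ ρ in (0:ℝ)..1, w ρ *
          ((∫ x in a..b, G (x, r - τ * ρ) ^ 2) + ∫ x in c..d, G (x, r - τ * ρ) ^ 2) := by
  have hlag : ∀ a b : ℝ, Continuous fun ρ => w ρ * ∫ x in a..b, G (x, r - τ * ρ) ^ 2 :=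
    fun a b => hw.mul ((continuous_integral_sq hG a b).comp (by fun_prop))
  rw [integral_integral_delay_sq hG hw hab hτ fun x hx => hv x (Or.inl hx),
    integral_integral_delay_sq hG hw hcd hτ fun x hx => hv x (Or.inr hx),
    ← integral_add ((hlag a b).intervalIntegrable _ _) ((hlag c d).intervalIntegrable _ _)]
  simp only [mul_add]

end SpaceIntegrals

theorem stmt12_general (L1 L2 L3 τ : ℝ) (h1 : 0 < L1) (h3 : L2 < L3) (hτ : 0 < τ)
    (u : ℝ → ℝ → ℝ)
    (hu : ContDiffOn ℝ 2 (Function.uncurry u)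
      ((Set.Icc 0 L1 ∪ Set.Icc L2 L3) ×ˢ Set.Ici (-τ)))
    (t : ℝ) (ht : 0 < t) :
    ∃ d, HasDerivAt
        (fun r => τ *
          ((∫ x in (0:ℝ)..L1, ∫ ρ in (0:ℝ)..1, Real.exp (-τ * ρ) * (deriv (u x) (r - τ * ρ)) ^ 2)
            + ∫ x in L2..L3, ∫ ρ in (0:ℝ)..1, Real.exp (-τ * ρ) * (deriv (u x) (r - τ * ρ)) ^ 2))
        d t ∧
      d ≤ -Real.exp (-τ) *
            (((∫ x in (0:ℝ)..L1, (deriv (u x) (t - τ)) ^ 2)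
                + ∫ x in L2..L3, (deriv (u x) (t - τ)) ^ 2)
              + τ * ((∫ x in (0:ℝ)..L1, ∫ ρ in (0:ℝ)..1, (deriv (u x) (t - τ * ρ)) ^ 2)
                + ∫ x in L2..L3, ∫ ρ in (0:ℝ)..1, (deriv (u x) (t - τ * ρ)) ^ 2))
          + ((∫ x in (0:ℝ)..L1, (deriv (u x) t) ^ 2) + ∫ x in L2..L3, (deriv (u x) t) ^ 2) := by
  obtain ⟨G, hG, hGu⟩ := exists_continuous_hasDerivAt_of_contDiffOn
    (isClosed_Icc.union isClosed_Icc) ((uniqueDiffOn_Icc h1).union (uniqueDiffOn_Icc h3))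
    (hu.of_le one_le_two)
  have hderiv : ∀ r, 0 < r → ∀ x ∈ Icc 0 L1 ∪ Icc L2 L3, ∀ s, r - τ ≤ s →
      deriv (u x) s = G (x, s) := fun r hr x hx s hs => (hGu x hx s (by linarith)).deriv
  set ψ : ℝ → ℝ := fun s => (∫ x in (0:ℝ)..L1, G (x, s) ^ 2) + ∫ x in L2..L3, G (x, s) ^ 2
  have hψ : Continuous ψ := (continuous_integral_sq hG 0 L1).add (continuous_integral_sq hG L2 L3)
  have hψ0 : ∀ s, 0 ≤ ψ s := fun s => add_nonneg
    (integral_nonneg h1.le fun _ _ => sq_nonneg _) (integral_nonneg h3.le fun _ _ => sq_nonneg _)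
  have hdelay : ∀ w : ℝ → ℝ, Continuous w → ∀ r, 0 < r →
      (∫ x in (0:ℝ)..L1, ∫ ρ in (0:ℝ)..1, w ρ * deriv (u x) (r - τ * ρ) ^ 2)
        + ∫ x in L2..L3, ∫ ρ in (0:ℝ)..1, w ρ * deriv (u x) (r - τ * ρ) ^ 2
      = ∫ ρ in (0:ℝ)..1, w ρ * ψ (r - τ * ρ) := fun w hw r hr =>
    integral_integral_delay_sq_add hG hw h1.le h3.le hτ.le (hderiv r hr)
  refine ⟨_, (hasDerivAt_delayEnergy hτ.ne' hψ t).congr_of_eventuallyEq ?_, ?_⟩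
  · filter_upwards [Ioi_mem_nhds ht] with r hr
    rw [hdelay _ (by fun_prop) r hr, delayEnergy]
  have hspace := fun s hs => integral_add_integral_sq_congr h1.le h3.le (hderiv t ht · · s hs)
  have hz := hdelay (fun _ => 1) continuous_const t ht
  simp only [one_mul] at hz
  rw [hspace t (by linarith), hspace (t - τ) le_rfl, hz]
  linarith [exp_neg_mul_integral_le_delayEnergy hτ.le hψ hψ0 t]

/-- fix `0 < L₁ < L₂ < L₃`, `Ω = (0,L₁) ∪ (L₂,L₃)`, `τ > 0`, and
`u : ([0,L₁] ∪ [L₂,L₃]) × [−τ,∞) → ℝ` of class `C²`. With `z(x,ρ,t) := u_t(x, t−τρ)` and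
`F₃(t) := τ∫_Ω ∫₀¹ e^{−τρ} z(x,ρ,t)² dρ dx` (where `∫_Ω f := ∫₀^{L₁} f + ∫_{L₂}^{L₃} f`),
for every `t > 0`:
`F₃'(t) ≤ −e^{−τ}(∫_Ω z(·,1,t)² + τ∫_Ω ∫₀¹ z(·,ρ,t)² dρ) + ∫_Ω u_t(·,t)²`. -/
theorem stmt12 (L1 L2 L3 τ : ℝ) (h1 : 0 < L1) (h2 : L1 < L2) (h3 : L2 < L3) (hτ : 0 < τ)
    (u : ℝ → ℝ → ℝ)
    (hu : ContDiffOn ℝ 2 (Function.uncurry u)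
      ((Set.Icc 0 L1 ∪ Set.Icc L2 L3) ×ˢ Set.Ici (-τ)))
    (t : ℝ) (ht : 0 < t) :
    ∃ d, HasDerivAt
        (fun r => τ *
          ((∫ x in (0:ℝ)..L1, ∫ ρ in (0:ℝ)..1, Real.exp (-τ * ρ) * (deriv (u x) (r - τ * ρ)) ^ 2)
            + ∫ x in L2..L3, ∫ ρ in (0:ℝ)..1, Real.exp (-τ * ρ) * (deriv (u x) (r - τ * ρ)) ^ 2))
        d t ∧
      d ≤ -Real.exp (-τ) *
            (((∫ x in (0:ℝ)..L1, (deriv (u x) (t - τ)) ^ 2)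
                + ∫ x in L2..L3, (deriv (u x) (t - τ)) ^ 2)
              + τ * ((∫ x in (0:ℝ)..L1, ∫ ρ in (0:ℝ)..1, (deriv (u x) (t - τ * ρ)) ^ 2)
                + ∫ x in L2..L3, ∫ ρ in (0:ℝ)..1, (deriv (u x) (t - τ * ρ)) ^ 2))
          + ((∫ x in (0:ℝ)..L1, (deriv (u x) t) ^ 2) + ∫ x in L2..L3, (deriv (u x) t) ^ 2) :=
  stmt12_general L1 L2 L3 τ h1 h3 hτ u hu t ht
end
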